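/- Let X = X[λ, μ, 𝒜, C̄]. Every closed bounded subspace F ⊆ X is a D-subspace of X: for every open neighborhood assignment U : F → τ(X) (with x ∈ U(x) for all x ∈ F) there is a closed discrete D ⊆ F with F ⊆ ⋃{U(d) : d ∈ D}. -/

import Mathlib

open Set Ordinal Cardinal Topology

noncomputable section

namespace DSoukupPaper

/-- The set `S^λ_μ` of ordinals below `lam` of cofinality `mu`. -/
def Sset (lam : Ordinal.{0}) (mu : Cardinal.{0}) : Set Ordinal := {α | α < lam ∧ α.cof = mu}

/-- `C` is a club in the ordinal `o`. -/
def IsClubBelow (C : Set Ordinal.{0}) (o : Ordinal.{0}) : Prop :=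
  C ⊆ Set.Iio o ∧ (∀ β < o, ∃ γ ∈ C, β ≤ γ) ∧
    (∀ β < o, Order.IsSuccLimit β → (∀ γ < β, ∃ δ ∈ C, γ < δ ∧ δ < β) → β ∈ C)

/-- `A` is nonstationary in the ordinal `o`. -/
def IsNonstationaryBelow (A : Set Ordinal.{0}) (o : Ordinal.{0}) : Prop :=
  ∃ C : Set Ordinal, IsClubBelow C o ∧ ∀ x ∈ A, x ∉ C

/-- `A` is stationary in the ordinal `o`. -/
def IsStationaryBelow (A : Set Ordinal.{0}) (o : Ordinal.{0}) : Prop :=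
  ∀ C : Set Ordinal, IsClubBelow C o → ∃ x ∈ A, x ∈ C

/-- A `T₁` space is linearly D iff every nontrivial monotone open cover admits a
closed discrete big set (Guo–Junnila characterization, taken as definition). -/
def LinearlyDSpace (Y : Type*) [TopologicalSpace Y] : Prop :=
  ∀ 𝒰 : Set (Set Y), (∀ U ∈ 𝒰, IsOpen U) → ⋃₀ 𝒰 = Set.univ →
    IsChain (· ⊆ ·) 𝒰 → (∀ U ∈ 𝒰, U ≠ Set.univ) →
    ∃ D : Set Y, IsClosed D ∧ DiscreteTopology D ∧ ∀ U ∈ 𝒰, ¬D ⊆ U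

/-- The data of the construction `X[λ,μ,𝒜,C̄]`: cardinals `λ > μ = cf(μ)`,
a MAD family `𝒜 = {M^φ : φ < κ} ⊆ [μ]^μ`, and an `S^λ_μ`-club sequence
`C̄ = ⟨C_α : α ∈ S^λ_μ⟩`, given via increasing enumerations `a α : μ → C_α`. -/
structure Setup where
  lam : Cardinal.{0}
  mu : Cardinal.{0}
  kappa : Cardinal.{0}
  mu_reg : mu.IsRegular
  mu_lt_lam : mu < lam
  /-- the MAD family: `M φ` for `φ < κ` -/
  M : Ordinal.{0} → Set Ordinal.{0}
  M_sub : ∀ φ < kappa.ord, M φ ⊆ Set.Iio mu.ord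
  M_card : ∀ φ < kappa.ord, #(M φ) = Cardinal.lift.{1} mu
  M_ad : ∀ φ < kappa.ord, ∀ ψ < kappa.ord, φ ≠ ψ →
    #(↥(M φ ∩ M ψ)) < Cardinal.lift.{1} mu
  M_mad : ∀ N ⊆ Set.Iio mu.ord, #N = Cardinal.lift.{1} mu →
    ∃ φ < kappa.ord, #(↥(N ∩ M φ)) = Cardinal.lift.{1} mu
  /-- the club sequence: `a α ξ` is the `ξ`-th element of `C_α` -/
  a : Ordinal.{0} → Ordinal.{0} → Ordinal.{0}
  a_mono : ∀ α ∈ Sset lam.ord mu, ∀ ξ < mu.ord, ∀ ζ < ξ, a α ζ < a α ξ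
  a_lt : ∀ α ∈ Sset lam.ord mu, ∀ ξ < mu.ord, a α ξ < α
  a_unbounded : ∀ α ∈ Sset lam.ord mu, ∀ β < α, ∃ ξ < mu.ord, β ≤ a α ξ
  a_closed : ∀ α ∈ Sset lam.ord mu, ∀ ξ < mu.ord, Order.IsSuccLimit ξ →
    IsLUB (a α '' Set.Iio ξ) (a α ξ)

namespace Setup

variable (P : Setup)

/-- `C_α` as a set. -/
def C (α : Ordinal) : Set Ordinal := P.a α '' Set.Iio P.mu.ord

open Classical in
/-- the interval `I^ξ_α`. -/
def I (α ξ : Ordinal) : Set Ordinal :=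
  if Order.IsSuccLimit ξ then Set.Icc (P.a α ξ) (P.a α (ξ + 1)) else Set.Ioc (P.a α ξ) (P.a α (ξ + 1))

/-- the underlying set of the space: a subset of `λ × κ`. -/
def Xset : Set (Ordinal × Ordinal) :=
  {p | p.1 < P.lam.ord ∧
    ((p.1 ∈ Sset P.lam.ord P.mu ∧ p.2 < P.kappa.ord) ∨
      (p.1 ∉ Sset P.lam.ord P.mu ∧ p.2 = 0))}

/-- the column `X_α` (as a set of pairs). -/
def col (α : Ordinal) : Set (Ordinal × Ordinal) := {p ∈ P.Xset | p.1 = α}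

/-- basic neighborhood `U((α,φ),η)` for `α ∈ S^λ_μ`. -/
def U1 (α φ η : Ordinal) : Set (Ordinal × Ordinal) :=
  {(α, φ)} ∪ ⋃ γ ∈ (⋃ ξ ∈ {ξ | ξ ∈ P.M φ ∧ η ≤ ξ}, P.I α ξ), P.col γ

/-- basic neighborhood `U(α,β) = ⋃{X_γ : β < γ ≤ α}`. -/
def U3 (α β : Ordinal) : Set (Ordinal × Ordinal) := ⋃ γ ∈ Set.Ioc β α, P.col γ

/-- the collection of basic open sets. -/
def basics : Set (Set (Ordinal × Ordinal)) :=
  {B | (∃ α ∈ Sset P.lam.ord P.mu, ∃ φ < P.kappa.ord, ∃ η < P.mu.ord, B = P.U1 α φ η) ∨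
    (∃ α < P.lam.ord, α.cof < P.mu ∧ B = {(α, 0)}) ∨
    (∃ α < P.lam.ord, P.mu < α.cof ∧ ∃ β < α, B = P.U3 α β)}

/-- the topology of `X[λ,μ,𝒜,C̄]`, generated by the basic open sets. -/
instance instTopo : TopologicalSpace ↥P.Xset :=
  TopologicalSpace.generateFrom {V | ∃ B ∈ P.basics, V = Subtype.val ⁻¹' B}

/-- the column `X_α` viewed inside the space. -/
def colS (α : Ordinal) : Set ↥P.Xset := {x | (x : Ordinal × Ordinal).1 = α}

/-- the projection `π(F) = {α < λ : F ∩ X_α ≠ ∅}`. -/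
def pi (F : Set ↥P.Xset) : Set Ordinal := {α | ∃ x ∈ F, (x : Ordinal × Ordinal).1 = α}

/-- `F` is unbounded iff `π(F)` is unbounded in `λ`. -/
def Unbounded (F : Set ↥P.Xset) : Prop := ∀ β < P.lam.ord, ∃ γ ∈ P.pi F, β < γ

/-- `F` is high enough iff `|{α < λ : |F_α| = |F|}| ≥ μ`. -/
def HighEnough (F : Set ↥P.Xset) : Prop :=
  Cardinal.lift.{1} P.mu ≤ #({α | #(↥(F ∩ P.colS α)) = #F} : Set Ordinal)

end Setup
end DSoukupPaper

/-!
Induction on the top column `δ` of `F`. The trace `F ∩ X_δ` is closed discrete, so it joins the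
kernel together with its `U`-neighbourhoods, and what remains of `F` is a closed set below `δ`.
If `μ < cf δ`, such a set is bounded below `δ`: the point `(δ, 0)` lies in the closure of every
tail of columns below it. If `cf δ ≤ μ`, the columns below `δ` split into `cf δ` disjoint clopen
blocks, each bounded below `δ`, because columns of cofinality `< μ` consist of isolated points; the
kernels of the blocks glue to a kernel of `F`.
-/

section ClosedDiscreteKernel

open Filter Function

variable {X : Type*} [TopologicalSpace X]

theorem isClosed_and_discreteTopology_iff {S : Set X} :
    IsClosed S ∧ DiscreteTopology S ↔ ∀ x, Sᶜ ∈ 𝓝[≠] x := by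
  simp only [← isDiscrete_iff_discreteTopology, isClosed_and_discrete_iff,
    disjoint_principal_right]

theorem isClosed_and_discreteTopology_of_subset {S T : Set X}
    (hT : IsClosed T ∧ DiscreteTopology T) (hST : S ⊆ T) : IsClosed S ∧ DiscreteTopology S := by
  rw [isClosed_and_discreteTopology_iff] at hT ⊢
  exact fun x => mem_of_superset (hT x) (compl_subset_compl.mpr hST)

theorem isClosed_and_discreteTopology_union {S T : Set X}
    (hS : IsClosed S ∧ DiscreteTopology S) (hT : IsClosed T ∧ DiscreteTopology T) :
    IsClosed (S ∪ T) ∧ DiscreteTopology ↥(S ∪ T) := by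
  rw [isClosed_and_discreteTopology_iff] at hS hT ⊢
  exact fun x => by simpa only [compl_union] using inter_mem (hS x) (hT x)

def HasClosedDiscreteKernel (U : X → Set X) (F : Set X) : Prop :=
  ∃ D ⊆ F, IsClosed D ∧ DiscreteTopology D ∧ F ⊆ ⋃ x ∈ D, U x

variable {U : X → Set X} {F : Set X}

theorem HasClosedDiscreteKernel.of_sdiff {D : Set X} (hDF : D ⊆ F)
    (hD : IsClosed D ∧ DiscreteTopology D) (h : HasClosedDiscreteKernel U (F \ ⋃ d ∈ D, U d)) :
    HasClosedDiscreteKernel U F := by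
  obtain ⟨E, hEF, hEc, hEd, hcov⟩ := h
  obtain ⟨hc, hd⟩ := isClosed_and_discreteTopology_union hD ⟨hEc, hEd⟩
  refine ⟨D ∪ E, union_subset hDF (hEF.trans sdiff_subset), hc, hd, fun x hx => ?_⟩
  by_cases hxD : x ∈ ⋃ d ∈ D, U d
  · exact biUnion_subset_biUnion_left subset_union_left hxD
  · exact biUnion_subset_biUnion_left subset_union_right (hcov ⟨hx, hxD⟩)

theorem HasClosedDiscreteKernel.of_pairwise_disjoint_isOpen {ι : Type*} {W : ι → Set X}
    (hW : ∀ i, IsOpen (W i)) (hWd : Pairwise (Disjoint on W)) (hF : IsClosed F)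
    (hFW : F ⊆ ⋃ i, W i) (h : ∀ i, HasClosedDiscreteKernel U (F ∩ W i)) :
    HasClosedDiscreteKernel U F := by
  choose D hDF hDc hDd hcov using h
  have hD : IsClosed (⋃ i, D i) ∧ DiscreteTopology ↥(⋃ i, D i) := by
    refine isClosed_and_discreteTopology_iff.mpr fun x => ?_
    by_cases hx : x ∈ F
    · obtain ⟨i, hi⟩ := mem_iUnion.mp (hFW hx)
      filter_upwards [isClosed_and_discreteTopology_iff.mp ⟨hDc i, hDd i⟩ x,
        mem_nhdsWithin_of_mem_nhds ((hW i).mem_nhds hi)] with y hyD hyW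
      simp only [mem_compl_iff, mem_iUnion, not_exists]
      intro j hyj
      obtain rfl | hij := eq_or_ne i j
      · exact hyD hyj
      · exact (hWd hij).notMem_of_mem_left hyW (hDF j hyj).2
    · filter_upwards [mem_nhdsWithin_of_mem_nhds (hF.isOpen_compl.mem_nhds hx)] with y hy
      simp only [mem_compl_iff, mem_iUnion, not_exists]
      exact fun j hyj => hy (hDF j hyj).1
  refine ⟨⋃ i, D i, iUnion_subset fun i => (hDF i).trans inter_subset_left, hD.1, hD.2,
    fun x hx => ?_⟩
  obtain ⟨i, hi⟩ := mem_iUnion.mp (hFW hx)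
  exact biUnion_subset_biUnion_left (subset_iUnion D i) (hcov i ⟨hx, hi⟩)

end ClosedDiscreteKernel

namespace DSoukupPaper

namespace Setup

open Order Function

variable {P : Setup}

theorem isSuccLimit_mu_ord (P : Setup) : IsSuccLimit P.mu.ord :=
  isSuccLimit_ord P.mu_reg.aleph0_le

theorem one_lt_mu (P : Setup) : 1 < P.mu :=
  one_lt_aleph0.trans_le P.mu_reg.aleph0_le

theorem mem_Sset_iff (x : P.Xset) : x.1.1 ∈ Sset P.lam.ord P.mu ↔ x.1.1.cof = P.mu :=
  and_iff_right x.2.1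

theorem snd_lt_kappa {x : P.Xset} (hx : x.1.1 ∈ Sset P.lam.ord P.mu) : x.1.2 < P.kappa.ord :=
  x.2.2.elim And.right fun h => (h.1 hx).elim

theorem snd_eq_zero {x : P.Xset} (hx : x.1.1 ∉ Sset P.lam.ord P.mu) : x.1.2 = 0 :=
  x.2.2.elim (fun h => (hx h.1).elim) And.right

theorem eq_of_fst_eq {x y : P.Xset} (hx : x.1.1 ∉ Sset P.lam.ord P.mu) (h : y.1.1 = x.1.1) :
    y = x :=
  Subtype.ext <| Prod.ext h <| by rw [snd_eq_zero hx, snd_eq_zero (h ▸ hx)]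

theorem a_le_a_of_le {α ζ ξ : Ordinal} (hα : α ∈ Sset P.lam.ord P.mu) (hξ : ξ < P.mu.ord)
    (h : ζ ≤ ξ) : P.a α ζ ≤ P.a α ξ := by
  obtain h | rfl := h.lt_or_eq
  exacts [(P.a_mono α hα ξ hξ ζ h).le, le_rfl]

theorem I_subset_Icc (α ξ : Ordinal) : P.I α ξ ⊆ Icc (P.a α ξ) (P.a α (ξ + 1)) := by
  unfold Setup.I
  split_ifs
  exacts [subset_rfl, Ioc_subset_Icc_self]

theorem Ioc_subset_I (α ξ : Ordinal) : Ioc (P.a α ξ) (P.a α (ξ + 1)) ⊆ P.I α ξ := by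
  unfold Setup.I
  split_ifs
  exacts [Ioc_subset_Icc_self, subset_rfl]

theorem mem_U1_iff {α φ η : Ordinal} {p : Ordinal × Ordinal} :
    p ∈ P.U1 α φ η ↔ p = (α, φ) ∨ p ∈ P.Xset ∧ ∃ ξ ∈ P.M φ, η ≤ ξ ∧ p.1 ∈ P.I α ξ := by
  simp only [Setup.U1, Setup.col, mem_union, mem_singleton_iff, mem_iUnion, mem_ofPred_eq,
    exists_prop]
  constructor
  · rintro (h | ⟨_, ⟨ξ, ⟨hM, hη⟩, hI⟩, hp, rfl⟩)
    exacts [Or.inl h, Or.inr ⟨hp, ξ, hM, hη, hI⟩]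
  · rintro (h | ⟨hp, ξ, hM, hη, hI⟩)
    exacts [Or.inl h, Or.inr ⟨_, ⟨ξ, ⟨hM, hη⟩, hI⟩, hp, rfl⟩]

theorem mem_U3_iff {α β : Ordinal} {p : Ordinal × Ordinal} :
    p ∈ P.U3 α β ↔ p ∈ P.Xset ∧ β < p.1 ∧ p.1 ≤ α := by
  simp only [Setup.U3, Setup.col, mem_iUnion, mem_ofPred_eq, mem_Ioc, exists_prop]
  constructor
  · rintro ⟨_, hγ, hp, rfl⟩
    exact ⟨hp, hγ⟩
  · rintro ⟨hp, hγ⟩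
    exact ⟨_, hγ, hp, rfl⟩

theorem isOpen_preimage_of_mem_basics {B : Set (Ordinal × Ordinal)} (hB : B ∈ P.basics) :
    IsOpen (Subtype.val ⁻¹' B : Set P.Xset) :=
  TopologicalSpace.isOpen_generateFrom_of_mem ⟨B, hB, rfl⟩

theorem cof_a_lt_mu {α ξ : Ordinal} (hα : α ∈ Sset P.lam.ord P.mu) (hξ : ξ < P.mu.ord)
    (hlim : IsSuccLimit ξ) : (P.a α ξ).cof < P.mu := by
  have hsup : ⨆ ζ : Iio ξ, P.a α ζ = P.a α ξ :=
    (P.a_closed α hα ξ hξ hlim).ciSup_set_eq ⟨0, hlim.bot_lt⟩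
  rw [← hsup, cof_iSup_Iio (fun ζ ζ' h => P.a_mono α hα ζ' (ζ'.2.trans hξ) ζ h)
    hlim.isSuccPrelimit]
  exact (cof_le_card ξ).trans_lt (Cardinal.lt_ord.mp hξ)

theorem isOpen_singleton_of_cof_lt {x : P.Xset} (hx : x.1.1.cof < P.mu) : IsOpen {x} := by
  have hS : x.1.1 ∉ Sset P.lam.ord P.mu := fun h => hx.ne h.2
  have : ({x} : Set P.Xset) = Subtype.val ⁻¹' {(x.1.1, 0)} := by
    ext y
    rw [mem_singleton_iff, mem_preimage, mem_singleton_iff, ← snd_eq_zero hS, Subtype.ext_iff]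
  rw [this]
  exact isOpen_preimage_of_mem_basics (Or.inr (Or.inl ⟨_, x.2.1, hx, rfl⟩))

theorem exists_isOpen_fst_mem_Ioo (x : P.Xset) {σ : Ordinal} (hσ : σ < x.1.1) :
    ∃ V : Set P.Xset, IsOpen V ∧ x ∈ V ∧ ∀ y ∈ V, y = x ∨ y.1.1 ∈ Ioo σ x.1.1 := by
  rcases lt_trichotomy x.1.1.cof P.mu with hlt | heq | hgt
  · exact ⟨{x}, isOpen_singleton_of_cof_lt hlt, rfl, fun y hy => Or.inl hy⟩
  · have hS : x.1.1 ∈ Sset P.lam.ord P.mu := (mem_Sset_iff x).mpr heq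
    obtain ⟨ξ₀, hξ₀, hσξ₀⟩ := P.a_unbounded _ hS σ hσ
    have hξ₀' : ξ₀ + 1 < P.mu.ord := (isSuccLimit_mu_ord P).add_one_lt hξ₀
    refine ⟨_, isOpen_preimage_of_mem_basics
      (Or.inl ⟨_, hS, _, snd_lt_kappa hS, _, hξ₀', rfl⟩), mem_U1_iff.mpr (Or.inl rfl), ?_⟩
    intro y hy
    rcases mem_U1_iff.mp hy with h | ⟨-, ξ, hM, hξ, hI⟩
    · exact Or.inl (Subtype.ext h)
    · have hξμ : ξ < P.mu.ord := P.M_sub _ (snd_lt_kappa hS) hM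
      refine Or.inr ⟨?_, (I_subset_Icc _ _ hI).2.trans_lt
        (P.a_lt _ hS _ ((isSuccLimit_mu_ord P).add_one_lt hξμ))⟩
      calc σ ≤ P.a _ ξ₀ := hσξ₀
        _ < P.a _ (ξ₀ + 1) := P.a_mono _ hS _ hξ₀' _ (lt_add_one ξ₀)
        _ ≤ P.a _ ξ := a_le_a_of_le hS hξμ hξ
        _ ≤ y.1.1 := (I_subset_Icc _ _ hI).1
  · have hS : x.1.1 ∉ Sset P.lam.ord P.mu := fun h => hgt.ne' h.2
    refine ⟨_, isOpen_preimage_of_mem_basics (Or.inr (Or.inr ⟨_, x.2.1, hgt, σ, hσ, rfl⟩)),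
      mem_U3_iff.mpr ⟨x.2, hσ, le_rfl⟩, fun y hy => ?_⟩
    obtain ⟨-, h₁, h₂⟩ := mem_U3_iff.mp hy
    exact h₂.lt_or_eq.symm.imp (eq_of_fst_eq hS) fun h => ⟨h₁, h⟩

theorem exists_isOpen_fst_lt (x : P.Xset) :
    ∃ V : Set P.Xset, IsOpen V ∧ x ∈ V ∧ ∀ y ∈ V, y = x ∨ y.1.1 < x.1.1 := by
  obtain h | h := eq_zero_or_pos x.1.1
  · refine ⟨{x}, isOpen_singleton_of_cof_lt ?_, rfl, fun y hy => Or.inl hy⟩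
    rw [h, cof_zero]
    exact P.one_lt_mu.trans' zero_lt_one
  · obtain ⟨V, hV, hxV, hy⟩ := exists_isOpen_fst_mem_Ioo x h
    exact ⟨V, hV, hxV, fun y hyV => (hy y hyV).imp_right And.right⟩

def below (P : Setup) (σ : Ordinal) : Set P.Xset := {x | x.1.1 < σ}

theorem isOpen_below (σ : Ordinal) : IsOpen (P.below σ) := by
  refine isOpen_iff_forall_mem_open.mpr fun x hx => ?_
  obtain ⟨V, hV, hxV, hy⟩ := exists_isOpen_fst_lt x
  exact ⟨V, fun y hyV => (hy y hyV).elim (· ▸ hx) (·.trans hx), hV, hxV⟩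

theorem isClosed_below {σ : Ordinal} (hσ : σ.cof < P.mu) : IsClosed (P.below σ) := by
  refine isOpen_compl_iff.mp <| isOpen_iff_forall_mem_open.mpr fun x hx => ?_
  obtain hσx | hσx := (not_lt.mp (show ¬x.1.1 < σ from hx)).lt_or_eq
  · obtain ⟨V, hV, hxV, hy⟩ := exists_isOpen_fst_mem_Ioo x hσx
    exact ⟨V, fun y hyV => (hy y hyV).elim (· ▸ hx) fun h => h.1.not_gt, hV, hxV⟩
  · exact ⟨{x}, singleton_subset_iff.mpr hx, isOpen_singleton_of_cof_lt (hσx ▸ hσ), rfl⟩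

theorem isClopen_below {σ : Ordinal} (hσ : σ.cof < P.mu) : IsClopen (P.below σ) :=
  ⟨isClosed_below hσ, isOpen_below σ⟩

theorem isClopen_below_add_one (σ : Ordinal) : IsClopen (P.below (σ + 1)) :=
  isClopen_below (by rw [cof_add_one]; exact P.one_lt_mu)

theorem isClosed_and_discreteTopology_colS (δ : Ordinal) :
    IsClosed (P.colS δ) ∧ DiscreteTopology (P.colS δ) := by
  refine isClosed_and_discreteTopology_iff.mpr fun x => mem_nhdsWithin.mpr ?_
  obtain hx | hx := le_or_gt x.1.1 δ
  · obtain ⟨V, hV, hxV, hy⟩ := exists_isOpen_fst_lt x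
    exact ⟨V, hV, hxV, fun y ⟨hyV, hyx⟩ =>
      (hy y hyV).elim (fun h => (hyx h).elim) fun h => (h.trans_le hx).ne⟩
  · obtain ⟨V, hV, hxV, hy⟩ := exists_isOpen_fst_mem_Ioo x hx
    exact ⟨V, hV, hxV, fun y ⟨hyV, hyx⟩ =>
      (hy y hyV).elim (fun h => (hyx h).elim) fun h => h.1.ne'⟩

theorem a_lt_of_mem_I {α ξ γ : Ordinal} (hα : α ∈ Sset P.lam.ord P.mu) (hξ : ξ < P.mu.ord)
    (hγ : γ ∈ P.I α ξ) (hcof : P.mu ≤ γ.cof) : P.a α ξ < γ := by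
  refine (I_subset_Icc α ξ hγ).1.lt_of_ne fun h => ?_
  by_cases hlim : IsSuccLimit ξ
  · exact (cof_a_lt_mu hα hξ hlim).not_ge (h ▸ hcof)
  · unfold Setup.I at hγ
    rw [if_neg hlim] at hγ
    exact hγ.1.ne h

theorem exists_tail_subset_of_mem_basics {δ : Ordinal} (hcof : P.mu < δ.cof)
    {B : Set (Ordinal × Ordinal)} (hB : B ∈ P.basics) (hδB : ((δ, 0) : Ordinal × Ordinal) ∈ B) :
    ∃ b < δ, ∀ y : P.Xset, b < y.1.1 → y.1.1 < δ → y.1 ∈ B := by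
  rcases hB with ⟨α, hα, φ, hφ, η, -, rfl⟩ | ⟨α, -, hα, rfl⟩ | ⟨α, -, -, β, -, rfl⟩
  · rcases mem_U1_iff.mp hδB with h | ⟨-, ξ, hM, hηξ, hI⟩
    · cases h
      exact (hcof.ne hα.2.symm).elim
    · refine ⟨_, a_lt_of_mem_I hα (P.M_sub φ hφ hM) hI hcof.le, fun y h₁ h₂ => ?_⟩
      exact mem_U1_iff.mpr <| Or.inr ⟨y.2, ξ, hM, hηξ,
        Ioc_subset_I α ξ ⟨h₁, h₂.le.trans (I_subset_Icc α ξ hI).2⟩⟩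
  · cases hδB
    exact (hcof.trans hα).false.elim
  · obtain ⟨-, h₁, h₂⟩ := mem_U3_iff.mp hδB
    exact ⟨β, h₁, fun y hy₁ hy₂ => mem_U3_iff.mpr ⟨y.2, hy₁, hy₂.le.trans h₂⟩⟩

theorem exists_tail_subset_of_isOpen {δ : Ordinal} (hcof : P.mu < δ.cof) {x : P.Xset}
    (hx : x.1.1 = δ) {V : Set P.Xset} (hV : IsOpen V) (hxV : x ∈ V) :
    ∃ b < δ, ∀ y : P.Xset, b < y.1.1 → y.1.1 < δ → y ∈ V := by
  induction hV with
  | basic s hs =>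
    obtain ⟨B, hB, rfl⟩ := hs
    have hx' : x.1 = (δ, 0) := Prod.ext hx (snd_eq_zero fun h => hcof.ne' (hx ▸ h.2))
    exact exists_tail_subset_of_mem_basics hcof hB (hx' ▸ hxV)
  | univ => exact ⟨0, cof_pos.mp (pos_of_gt hcof), fun _ _ _ => trivial⟩
  | inter s t _ _ ihs iht =>
    obtain ⟨b₁, hb₁, hs⟩ := ihs hxV.1
    obtain ⟨b₂, hb₂, ht⟩ := iht hxV.2
    exact ⟨max b₁ b₂, max_lt hb₁ hb₂, fun y hy₁ hy₂ =>
      ⟨hs y ((le_max_left _ _).trans_lt hy₁) hy₂, ht y ((le_max_right _ _).trans_lt hy₁) hy₂⟩⟩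
  | sUnion S _ ih =>
    obtain ⟨s, hs, hxs⟩ := hxV
    obtain ⟨b, hb, h⟩ := ih s hs hxs
    exact ⟨b, hb, fun y hy₁ hy₂ => ⟨s, hs, h y hy₁ hy₂⟩⟩

theorem exists_subset_below_add_one_of_isClosed {δ : Ordinal} (hδ : δ < P.lam.ord)
    (hcof : P.mu < δ.cof) {F : Set P.Xset} (hF : IsClosed F) (hFδ : F ⊆ P.below δ) :
    ∃ γ < δ, F ⊆ P.below (γ + 1) := by
  have hX : ((δ, 0) : Ordinal × Ordinal) ∈ P.Xset := ⟨hδ, Or.inr ⟨fun h => hcof.ne' h.2, rfl⟩⟩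
  obtain ⟨b, hb, hbF⟩ := exists_tail_subset_of_isOpen hcof (x := ⟨_, hX⟩) rfl hF.isOpen_compl
    fun h => lt_irrefl δ (hFδ h)
  exact ⟨b, hb, fun y hy => lt_add_one_iff.mpr (not_lt.mp fun h => hbF y h (hFδ hy) hy)⟩

/-- The cut points `σ i`, suprema of initial segments of a fundamental sequence of `δ`, have
cofinality `< μ`, so the blocks between consecutive cuts are clopen. -/
theorem exists_clopen_partition_below {δ : Ordinal} (hcof : δ.cof ≤ P.mu) :
    ∃ (γ : Iio δ.cof.ord → Ordinal) (W : Iio δ.cof.ord → Set P.Xset),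
      (∀ i, γ i < δ ∧ IsClopen (W i) ∧ W i ⊆ P.below (γ i + 1)) ∧
        Pairwise (Disjoint on W) ∧ P.below δ ⊆ ⋃ i, W i := by
  obtain ⟨f, hf⟩ := exists_isFundamentalSeq (o := δ) rfl
  let σ (i : Iio δ.cof.ord) : Ordinal :=
    ⨆ j : Iio i.1, (f (inclusion (Iio_subset_Iio (le_of_lt i.2)) j)).1 + 1
  have hσ_cof (i) : (σ i).cof < P.mu := by
    have hmono :
        StrictMono fun j : Iio i.1 => (f (inclusion (Iio_subset_Iio (le_of_lt i.2)) j)).1 :=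
      fun j k h => hf.strictMono (show inclusion _ j < inclusion _ k from h)
    exact (cof_iSup_Iio_add_one hmono).trans_lt
      ((cof_le_card _).trans_lt ((Cardinal.lt_ord.mp i.2).trans_le hcof))
  have hlt_σ {i j} (h : j < i) : (f j).1 < σ i :=
    add_one_le_iff.mp (Ordinal.le_iSup (fun k : Iio i.1 => _) ⟨j.1, h⟩)
  have hσ_le {i o} (h : ∀ j < i, (f j).1 < o) : σ i ≤ o :=
    Ordinal.iSup_le fun k => add_one_le_iff.mpr (h _ k.2)
  refine ⟨fun i => f i, fun i => P.below ((f i).1 + 1) \ P.below (σ i),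
    fun i => ⟨(f i).2, (isClopen_below_add_one _).diff (isClopen_below (hσ_cof i)), sdiff_subset⟩,
    ?_, fun x hx => ?_⟩
  · refine (pairwise_disjoint_on _).mpr fun i j hij => disjoint_left.mpr fun x hi hj => ?_
    exact hj.2 ((lt_add_one_iff.mp hi.1).trans_lt (hlt_σ hij))
  · obtain ⟨-, ⟨i₀, rfl⟩, hi₀⟩ := hf.isCofinal_range ⟨_, hx⟩
    obtain ⟨i, hi, hmin⟩ := wellFounded_lt.has_min {i | x.1.1 ≤ (f i).1} ⟨i₀, hi₀⟩
    exact mem_iUnion.mpr ⟨i, show x.1.1 < _ from lt_add_one_iff.mpr hi,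
      not_lt.mpr (hσ_le fun j hj => not_le.mp fun h => hmin j h hj)⟩

section Kernel

variable {U : P.Xset → Set P.Xset}

theorem hasClosedDiscreteKernel_of_subset_below {δ : Ordinal} (hδ : δ < P.lam.ord)
    (ih : ∀ γ < δ, ∀ F : Set P.Xset, IsClosed F → F ⊆ P.below (γ + 1) →
      (∀ x ∈ F, IsOpen (U x) ∧ x ∈ U x) → HasClosedDiscreteKernel U F)
    {F : Set P.Xset} (hF : IsClosed F) (hFδ : F ⊆ P.below δ)
    (hU : ∀ x ∈ F, IsOpen (U x) ∧ x ∈ U x) : HasClosedDiscreteKernel U F := by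
  obtain hcof | hcof := le_or_gt δ.cof P.mu
  · obtain ⟨γ, W, hW, hWd, hcov⟩ := exists_clopen_partition_below (P := P) hcof
    refine .of_pairwise_disjoint_isOpen (fun i => (hW i).2.1.isOpen) hWd hF (hFδ.trans hcov)
      fun i => ih (γ i) (hW i).1 _ (hF.inter (hW i).2.1.isClosed)
        (inter_subset_right.trans (hW i).2.2) fun x hx => hU x hx.1
  · obtain ⟨γ, hγ, hFγ⟩ := exists_subset_below_add_one_of_isClosed hδ hcof hF hFδ
    exact ih γ hγ F hF hFγ hU

theorem hasClosedDiscreteKernel_of_subset_below_add_one {δ : Ordinal} (hδ : δ < P.lam.ord)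
    {F : Set P.Xset} (hF : IsClosed F) (hFδ : F ⊆ P.below (δ + 1))
    (hU : ∀ x ∈ F, IsOpen (U x) ∧ x ∈ U x) : HasClosedDiscreteKernel U F := by
  induction δ using WellFoundedLT.induction generalizing F with
  | _ δ ih =>
  have htop : F \ P.below δ ⊆ P.colS δ := fun x hx =>
    (Order.lt_add_one_iff.mp (hFδ hx.1)).antisymm (not_lt.mp hx.2)
  refine .of_sdiff sdiff_subset
    (isClosed_and_discreteTopology_of_subset (isClosed_and_discreteTopology_colS δ) htop) ?_
  refine hasClosedDiscreteKernel_of_subset_below hδ (fun γ hγ _ => ih γ hγ (hγ.trans hδ))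
    (hF.sdiff (isOpen_biUnion fun x hx => (hU x hx.1).1)) (fun x hx => ?_)
    fun x hx => hU x hx.1
  by_contra hxδ
  exact hx.2 (mem_biUnion ⟨hx.1, hxδ⟩ (hU x hx.1).2)

end Kernel

end Setup

/-- Every closed bounded `F ⊆ X` is a D-subspace of `X`. -/
theorem stmt12 (P : Setup) (F : Set ↥P.Xset) (hF : IsClosed F)
    (hbd : ∃ β < P.lam.ord, ∀ γ ∈ P.pi F, γ ≤ β)
    (U : ↥P.Xset → Set ↥P.Xset) (hU : ∀ x ∈ F, IsOpen (U x) ∧ x ∈ U x) :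
    ∃ D ⊆ F, IsClosed D ∧ DiscreteTopology D ∧ F ⊆ ⋃ x ∈ D, U x := by
  obtain ⟨β, hβ, hFβ⟩ := hbd
  exact Setup.hasClosedDiscreteKernel_of_subset_below_add_one hβ hF
    (fun x hx => Order.lt_add_one_iff.mpr (hFβ _ ⟨x, hx, rfl⟩)) hU

end DSoukupPaper
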